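/- arXiv:math/0304064 — 2 statements merged into one kernel-verified Lean document; each statement's English description precedes it below -/
import Mathlib

section
/- The functor from Δ_big^op to ∇ sending a nonempty finite linearly ordered set I to I* := Hom_{Δ_big}(I, {0,1}) (the set of nondecreasing maps I → {0,1}, equipped with the pointwise order) is an equivalence of categories. Here ∇ is the category of finite linearly ordered sets J with at least 2 elements, with morphisms the nondecreasing maps preserving both the minimal and the maximal element. -/
/-!
A nondecreasing map `I → {0,1}` on a finite linear order is either constantly `0` or the
indicator of an interval `[i, ∞)`, and these indicators are antitone in `i`; so `I*` is a
finite linear order with `|I| + 1` elements. Since a finite linear order is determined up to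
isomorphism by its cardinality, every object of `∇` is some `I*`.

For full faithfulness, one looks at points: a monotone map `φ : I* → {0,1}` with `φ ⊥ = 0` and
`φ ⊤ = 1` is evaluation at the largest `x` with `φ (1_{[x, ∞)}) = 1`. Applying this to
`g ↦ ψ g y` for a morphism `ψ : X* → Y*` of `∇` produces the map `Y → X` inducing `ψ`, and the
indicators `1_{[i, ∞)}` separate points, which gives uniqueness.
-/

open CategoryTheory

universe u

/-- Objects of the category `∇`: finite linear orders with at least two elements
(encoded via a bounded-order structure with `⊥ ≠ ⊤`). -/
structure NablaObj : Type (u + 1) where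
  carrier : Type u
  [lin : LinearOrder carrier]
  [fin : Fintype carrier]
  [bdd : BoundedOrder carrier]
  bot_ne_top : (⊥ : carrier) ≠ ⊤

attribute [instance] NablaObj.lin NablaObj.fin NablaObj.bdd

/-- The category `∇` of the paper. -/
instance : Category NablaObj.{u} where
  Hom J K := {f : J.carrier → K.carrier // Monotone f ∧ f ⊥ = ⊥ ∧ f ⊤ = ⊤}
  id J := ⟨id, monotone_id, rfl, rfl⟩
  comp {J K L} f g := ⟨g.1 ∘ f.1, g.2.1.comp f.2.1,
    by simp [f.2.2.1, g.2.2.1], by simp [f.2.2.2, g.2.2.2]⟩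

section starInstances

variable (I : Type u) [LinearOrder I] [Fintype I] [Nonempty I]

attribute [local instance] Classical.propDecidable

noncomputable instance starLinearOrder : LinearOrder (I →o Fin 2) :=
  { (inferInstance : PartialOrder (I →o Fin 2)) with
    le_total := fun f g => by
      by_cases h : f ≤ g
      · exact Or.inl h
      · refine Or.inr fun j => ?_
        rw [OrderHom.le_def] at h
        push_neg at h
        obtain ⟨i, hi⟩ := h
        show g j ≤ f j
        rw [Fin.lt_def] at hi
        rcases le_total j i with hj | hj
        · have h1 : g j ≤ g i := g.monotone hj
          rw [Fin.le_def] at h1 ⊢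
          have h3 := (f j).isLt
          omega
        · have h1 : f i ≤ f j := f.monotone hj
          rw [Fin.le_def] at h1 ⊢
          have h3 := (g j).isLt
          have h4 := (f j).isLt
          omega
    min := fun a b => if a ≤ b then a else b
    max := fun a b => if a ≤ b then b else a
    toDecidableLE := Classical.decRel _ }

noncomputable instance starFintype : Fintype (I →o Fin 2) :=
  Fintype.ofInjective (fun f => (f : I → Fin 2)) fun f g h => OrderHom.ext _ _ h

instance starBoundedOrder : BoundedOrder (I →o Fin 2) where
  top := ⟨fun _ => Fin.last 1, monotone_const⟩
  le_top f i := Fin.le_last (f i)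
  bot := ⟨fun _ => 0, monotone_const⟩
  bot_le f i := Fin.zero_le (f i)

theorem star_bot_ne_top : (⊥ : I →o Fin 2) ≠ ⊤ := fun h => by
  have h2 : (⊥ : I →o Fin 2) (Classical.arbitrary I) =
      (⊤ : I →o Fin 2) (Classical.arbitrary I) := by rw [h]
  exact absurd h2 (by show ¬ ((0 : Fin 2) = Fin.last 1); decide)

end starInstances

/-- The object part of the star functor: `I ↦ I* = Hom_{Δ_big}(I, Fin 2)`. -/
noncomputable def starObj (I : NonemptyFinLinOrd.{u}) : NablaObj.{u} where
  carrier := I →o Fin 2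
  bot_ne_top := star_bot_ne_top I

noncomputable def starFunctor : NonemptyFinLinOrd.{u}ᵒᵖ ⥤ NablaObj.{u} where
  obj I := starObj I.unop
  map {I I'} f := ⟨fun g => g.comp f.unop.hom.hom, fun _ _ h i => h (f.unop i), rfl, rfl⟩
  map_id I := rfl
  map_comp f g := rfl

section iciIndicator

variable {I : Type*} [Preorder I] [DecidableLE I]

def iciIndicator (i : I) : I →o Fin 2 :=
  ⟨fun x => if i ≤ x then 1 else 0, fun a b hab => by
    dsimp only
    split_ifs with ha hb
    exacts [le_rfl, absurd (ha.trans hab) hb, Fin.zero_le _, le_rfl]⟩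

lemma iciIndicator_apply (i x : I) : iciIndicator i x = if i ≤ x then 1 else 0 :=
  rfl

@[simp]
lemma iciIndicator_apply_eq_one {i x : I} : iciIndicator i x = 1 ↔ i ≤ x := by
  simp [iciIndicator_apply]

@[simp]
lemma iciIndicator_apply_self (i : I) : iciIndicator i i = 1 :=
  iciIndicator_apply_eq_one.2 le_rfl

lemma iciIndicator_antitone : Antitone (iciIndicator (I := I)) := fun i j hij x => by
  by_cases hj : j ≤ x
  · simp [iciIndicator_apply, hj, hij.trans hj]
  · simp [iciIndicator_apply, hj]

lemma le_of_forall_iciIndicator_apply_le {a b : I}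
    (h : ∀ i, iciIndicator i a ≤ iciIndicator i b) : a ≤ b := by
  by_contra hab
  simpa [iciIndicator_apply, hab] using h a

end iciIndicator

lemma Fin.eq_of_eq_one_iff {a b : Fin 2} (h : a = 1 ↔ b = 1) : a = b := by
  omega

lemma OrderHom.forall_eq_zero_or_exists_eq_iciIndicator {I : Type*} [LinearOrder I]
    [WellFoundedLT I] (g : I →o Fin 2) : (∀ x, g x = 0) ∨ ∃ i, g = iciIndicator i := by
  refine or_iff_not_imp_left.2 fun h => ?_
  push Not at h
  obtain ⟨i, hi, hmin⟩ := wellFounded_lt.has_min {x | g x ≠ 0} h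
  refine ⟨i, OrderHom.ext _ _ (funext fun x => Fin.eq_of_eq_one_iff ?_)⟩
  rw [iciIndicator_apply_eq_one]
  constructor
  · intro hx
    exact not_lt.1 (hmin x (by simp [hx]))
  · intro hix
    have hi : g i ≠ 0 := hi
    have := g.monotone hix
    omega

lemma exists_forall_eq_apply_of_monotone {I : Type*} [LinearOrder I] [Finite I] [Nonempty I]
    {φ : (I →o Fin 2) → Fin 2} (hφ : Monotone φ) (hbot : φ ⊥ = 0) (htop : φ ⊤ = 1) : ∃ x, ∀ g, φ g = g x := by
  cases nonempty_fintype I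
  obtain ⟨m, hm⟩ := Finite.exists_min (id : I → I)
  have hm_top : iciIndicator m = ⊤ :=
    OrderHom.ext _ _ (funext fun x => iciIndicator_apply_eq_one.2 (hm x))
  obtain ⟨x, hx, hmax⟩ := (Finset.univ.filter fun i => φ (iciIndicator i) = 1).exists_max_image
    id ⟨m, by simpa [hm_top] using htop⟩
  simp only [Finset.mem_filter, Finset.mem_univ, true_and, id] at hx hmax
  have hφ_iff : ∀ i, φ (iciIndicator i) = 1 ↔ i ≤ x := fun i =>
    ⟨hmax i, fun hix => by have := hφ (iciIndicator_antitone hix); omega⟩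
  refine ⟨x, fun g => ?_⟩
  rcases g.forall_eq_zero_or_exists_eq_iciIndicator with hg | ⟨i, rfl⟩
  · obtain rfl : g = ⊥ := OrderHom.ext _ _ (funext hg)
    exact hbot
  · exact Fin.eq_of_eq_one_iff ((hφ_iff i).trans iciIndicator_apply_eq_one.symm)

lemma OrderHom.exists_comp_eq_of_monotone {X Y : Type*} [LinearOrder X] [Finite X] [Nonempty X]
    [Preorder Y] {ψ : (X →o Fin 2) → (Y →o Fin 2)} (hψ : Monotone ψ)
    (hbot : ψ ⊥ = ⊥) (htop : ψ ⊤ = ⊤) : ∃ u : Y →o X, ∀ g, ψ g = g.comp u := by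
  choose u hu using fun y => exists_forall_eq_apply_of_monotone (fun _ _ h => hψ h y)
    (DFunLike.congr_fun hbot y) (DFunLike.congr_fun htop y)
  refine ⟨⟨u, fun y₁ y₂ hy => le_of_forall_iciIndicator_apply_le fun i => ?_⟩,
    fun g => OrderHom.ext _ _ (funext fun y => hu y g)⟩
  rw [← hu, ← hu]
  exact (ψ _).monotone hy

lemma OrderHom.ext_of_forall_comp_eq {X Y : Type*} [PartialOrder X] [Preorder Y] {u v : Y →o X}
    (h : ∀ g : X →o Fin 2, g.comp u = g.comp v) : u = v := by
  classical
  ext y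
  exact le_antisymm
    (le_of_forall_iciIndicator_apply_le fun i => (DFunLike.congr_fun (h (iciIndicator i)) y).le)
    (le_of_forall_iciIndicator_apply_le fun i => (DFunLike.congr_fun (h (iciIndicator i)) y).ge)

lemma iciIndicator_injective {I : Type*} [PartialOrder I] [DecidableLE I] :
    Function.Injective (iciIndicator (I := I)) := fun i j h =>
  le_antisymm (iciIndicator_apply_eq_one.1 (congr($h j).trans (iciIndicator_apply_self _)))
    (iciIndicator_apply_eq_one.1 (congr($h i).symm.trans (iciIndicator_apply_self _)))

lemma Nat.card_orderHom_fin_two {I : Type*} [LinearOrder I] [Finite I] :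
    Nat.card (I →o Fin 2) = Nat.card I + 1 := by
  rw [← Finite.card_option]
  refine (Nat.card_eq_of_bijective (fun o => o.elim (OrderHom.const I 0) iciIndicator)
    ⟨?_, fun g => ?_⟩).symm
  · rintro (_ | i) (_ | j) h
    · rfl
    · simpa using congr($h j)
    · simpa using congr($h i)
    · exact congrArg some (iciIndicator_injective h)
  · rcases g.forall_eq_zero_or_exists_eq_iciIndicator with hg | ⟨i, rfl⟩
    · exact ⟨none, OrderHom.ext _ _ (funext fun x => (hg x).symm)⟩
    · exact ⟨some i, rfl⟩

def NablaObj.isoOfOrderIso {J K : NablaObj.{u}} (e : J.carrier ≃o K.carrier) : J ≅ K where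
  hom := ⟨e, e.monotone, e.map_bot, e.map_top⟩
  inv := ⟨e.symm, e.symm.monotone, e.symm.map_bot, e.symm.map_top⟩
  hom_inv_id := Subtype.ext (funext e.symm_apply_apply)
  inv_hom_id := Subtype.ext (funext e.apply_symm_apply)

lemma OrderIso.nonempty_of_card_eq {α β : Type*} [LinearOrder α] [Fintype α] [LinearOrder β]
    [Fintype β] (h : Nat.card α = Nat.card β) : Nonempty (α ≃o β) := by
  simp only [Nat.card_eq_fintype_card] at h
  exact ⟨(Fintype.orderIsoFinOfCardEq α h).symm.trans (Fintype.orderIsoFinOfCardEq β rfl)⟩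

lemma starFunctor_faithful : starFunctor.{u}.Faithful where
  map_injective h := Quiver.Hom.unop_inj (NonemptyFinLinOrd.hom_ext
    (OrderHom.ext_of_forall_comp_eq fun g => congrFun (congrArg Subtype.val h) g))

lemma starFunctor_full : starFunctor.{u}.Full where
  map_surjective {X Y} ψ := by
    obtain ⟨u, hu⟩ := OrderHom.exists_comp_eq_of_monotone ψ.2.1 ψ.2.2.1 ψ.2.2.2
    exact ⟨(NonemptyFinLinOrd.ofHom u).op, Subtype.ext (funext fun g => (hu g).symm)⟩

lemma starFunctor_essSurj : starFunctor.{u}.EssSurj where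
  mem_essImage J := by
    have : Nontrivial J.carrier := ⟨⟨⊥, ⊤, J.bot_ne_top⟩⟩
    obtain ⟨n, hn⟩ : ∃ n, Nat.card J.carrier = n + 2 :=
      ⟨Nat.card J.carrier - 2, by have := Finite.one_lt_card_iff_nontrivial.2 this; omega⟩
    let I := NonemptyFinLinOrd.of (ULift.{u} (Fin (n + 1)))
    have hI : Nat.card I = n + 1 := by simp [I]
    obtain ⟨e⟩ := OrderIso.nonempty_of_card_eq (α := (starFunctor.obj (.op I)).carrier)
      (β := J.carrier) (by rw [hn]; exact Nat.card_orderHom_fin_two.trans (by rw [hI]))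
    exact ⟨.op I, ⟨NablaObj.isoOfOrderIso e⟩⟩

/-- Drinfeld, Remarks (ii) of §1 (after Gabriel–Zisman): the functor
`Δ_big^op → ∇`, `I ↦ I* = Hom_{Δ_big}(I, {0,1})` with the pointwise order,
is an equivalence of categories. -/
theorem starFunctor_isEquivalence : starFunctor.{u}.IsEquivalence :=
  ⟨starFunctor_faithful, starFunctor_full, starFunctor_essSurj⟩
end

section
/- Let C be a small Z₊-category (a category with a chosen endomorphism 1_c of each object c such that f∘1_{c₁} = 1_{c₂}∘f for all f: c₁ → c₂) such that every full subcategory of C with one object is Z₊-isomorphic to [0]_cyc and every full subcategory with two objects is Z₊-isomorphic to [1]_cyc. Then for every pair of objects x, y of C there is a unique morphism f_{xy} : x → y such that every g : x → y is uniquely representable as g = f_{xy} ∘ (1_x)ⁿ for some n ∈ Z₊ (n ≥ 0). -/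
/-!
Z₊-categories (Drinfeld, "On the notion of geometric realization", §2):
a Z₊-category is a category `C` together with a morphism of monoids
`Z₊ → End(id_C)`, i.e. a compatible family of endomorphisms `1_c`.
-/

open CategoryTheory

universe v u

/-- A Z₊-category: a category with a natural endomorphism `1` of the identity
functor (equivalently, a morphism of monoids `Z₊ → End (id_C)`). -/
class ZPlus (C : Type u) [Category.{v} C] where
  one : ∀ c : C, c ⟶ c
  one_natural : ∀ {c d : C} (f : c ⟶ d), one c ≫ f = f ≫ one d

/-- `(1_c)ⁿ`. -/
def ZPlus.onePow {C : Type u} [Category.{v} C] [ZPlus C] (c : C) : ℕ → (c ⟶ c)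
  | 0 => 𝟙 c
  | n + 1 => ZPlus.onePow c n ≫ ZPlus.one c

/-- A Z₊-functor: a functor preserving the distinguished endomorphisms. -/
def IsZFunctor {C : Type*} {D : Type*} [Category C] [Category D] [ZPlus C] [ZPlus D]
    (G : C ⥤ D) : Prop :=
  ∀ c : C, G.map (ZPlus.one c) = ZPlus.one (G.obj c)

/-- An isomorphism of categories: a functor with a strict two-sided inverse. -/
def IsCatIso {C : Type*} {D : Type*} [Category C] [Category D] (G : C ⥤ D) : Prop :=
  ∃ G' : D ⥤ C, G ⋙ G' = 𝟭 C ∧ G' ⋙ G = 𝟭 D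

/-- A Z₊-isomorphism: a Z₊-functor which is an isomorphism of categories. -/
def IsZIso {C : Type*} {D : Type*} [Category C] [Category D] [ZPlus C] [ZPlus D]
    (G : C ⥤ D) : Prop :=
  IsZFunctor G ∧ IsCatIso G

/-- A full subcategory of a Z₊-category is a Z₊-category. -/
instance {C : Type u} [Category.{v} C] [ZPlus C] (Z : C → Prop) :
    ZPlus (ObjectProperty.FullSubcategory Z) where
  one c := InducedCategory.homMk (ZPlus.one c.obj : c.obj ⟶ c.obj)
  one_natural {c d} f := InducedCategory.hom_ext (ZPlus.one_natural (C := C) (f.hom : c.obj ⟶ d.obj))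

/-- `[0]_cyc`: the Z₊-category with one object whose endomorphism monoid is
`(Z₊, +)`, with `1` the generator. -/
def ZeroCyc : Type := SingleObj (Multiplicative ℕ)

instance : Category ZeroCyc := inferInstanceAs (Category (SingleObj (Multiplicative ℕ)))

instance : ZPlus ZeroCyc where
  one _ := Multiplicative.ofAdd (1 : ℕ)
  one_natural {c d} f :=
    mul_comm (G := Multiplicative ℕ) f (Multiplicative.ofAdd 1)

/-- `[1]_cyc`: the Z₊-category with two objects `0`, `1`, in which each hom-set
is a free Z₊-torsor; the morphism `n : x ⟶ y` represents `a·1ⁿ` (resp. `b·1ⁿ`,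
`1ⁿ`), where `a : 0 → 1` and `b : 1 → 0` are the generators, with `b∘a = 1₀`
and `a∘b = 1₁`. -/
def OneCyc : Type := Bool

instance : DecidableEq OneCyc := instDecidableEqBool

/-- Composition in `[1]_cyc`: torsor indices add, with a carry when both
morphisms change the object (since `b∘a = 1₀` and `a∘b = 1₁`). -/
def ocomp (x y z : OneCyc) (n m : ℕ) : ℕ :=
  n + m + (if x ≠ y ∧ y ≠ z then 1 else 0)

instance : Category OneCyc where
  Hom _ _ := ℕ
  id _ := (0 : ℕ)
  comp {x y z} n m := ocomp x y z n m
  id_comp {x y} f := by simp [ocomp]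
  comp_id {x y} f := by simp [ocomp]
  assoc {a b c d} f g h := by
    show ocomp a c d (ocomp a b c f g) h = ocomp a b d f (ocomp b c d g h)
    cases a <;> cases b <;> cases c <;> cases d <;> simp [ocomp, OneCyc] <;> omega

instance : ZPlus OneCyc where
  one _ := (1 : ℕ)
  one_natural {c d} f := by
    show ocomp c c d 1 f = ocomp c d d f 1
    cases c <;> cases d <;> simp [ocomp, OneCyc] <;> omega

/-- Hypothesis: every full subcategory of `C` with one object is Z₊-isomorphic
to `[0]_cyc`. -/
def OneObjHyp (C : Type u) [Category.{v} C] [ZPlus C] : Prop :=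
  ∀ x : C, ∃ Φ : ObjectProperty.FullSubcategory (fun c : C => c = x) ⥤ ZeroCyc, IsZIso Φ

/-- Hypothesis: every full subcategory of `C` with two objects is Z₊-isomorphic
to `[1]_cyc`. -/
def TwoObjHyp (C : Type u) [Category.{v} C] [ZPlus C] : Prop :=
  ∀ x y : C, x ≠ y →
    ∃ Φ : ObjectProperty.FullSubcategory (fun c : C => c = x ∨ c = y) ⥤ OneCyc, IsZIso Φ

/-!
Precomposition with `1_x` makes every hom-set `x ⟶ y` of a Z₊-category a Z₊-set. In `[0]_cyc`
and `[1]_cyc` each hom-set is a free Z₊-torsor, i.e. `ℕ` with `1_x` acting as `n ↦ n + 1`.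
Fully faithful Z₊-functors, in particular Z₊-isomorphisms and inclusions of full subcategories,
transport this property, so by hypothesis every hom-set of `C` is a free Z₊-torsor; its
basepoint `f_{xy}` is the unique element of index `0`, and `1_xⁿ ≫ f_{xy}` has index `n`.
-/

open ZPlus

/-- `Hom(x, y)` as a free Z₊-torsor under precomposition with `1_x`, indexed by `ℕ`. -/
def HomIsFreeTorsor {C : Type*} [Category C] [ZPlus C] (x y : C) : Prop :=
  ∃ φ : (x ⟶ y) ≃ ℕ, ∀ g, φ (one x ≫ g) = φ g + 1

theorem HomIsFreeTorsor.existsUnique_basepoint {C : Type*} [Category C] [ZPlus C] {x y : C}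
    (h : HomIsFreeTorsor x y) :
    ∃! f : x ⟶ y, ∀ g : x ⟶ y, ∃! n : ℕ, g = onePow x n ≫ f := by
  obtain ⟨φ, hφ⟩ := h
  have φ_onePow_comp (n : ℕ) (g : x ⟶ y) : φ (onePow x n ≫ g) = φ g + n := by
    induction n generalizing g with
    | zero => simp [onePow]
    | succ n ih => rw [onePow, Category.assoc, ih, hφ]; omega
  have eq_onePow_comp_iff (f g : x ⟶ y) (n : ℕ) : g = onePow x n ≫ f ↔ φ g = φ f + n := by
    rw [← φ_onePow_comp, φ.injective.eq_iff]
  refine ⟨φ.symm 0, fun g => ⟨φ g, ?_, fun n hn => ?_⟩, fun f hf => ?_⟩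
  · simp [eq_onePow_comp_iff]
  · simpa using ((eq_onePow_comp_iff _ g n).1 hn).symm
  · obtain ⟨n, hn, -⟩ := hf (φ.symm 0)
    rw [eq_onePow_comp_iff, Equiv.apply_symm_apply] at hn
    exact φ.eq_symm_apply.2 (by omega)

section

variable {A D : Type*} [Category A] [Category D] [ZPlus A] [ZPlus D]

lemma homIsFreeTorsor_iff_of_fullyFaithful {G : A ⥤ D} (hZ : IsZFunctor G)
    (hG : G.FullyFaithful) (a b : A) :
    HomIsFreeTorsor a b ↔ HomIsFreeTorsor (G.obj a) (G.obj b) := by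
  have map_one_comp (g : a ⟶ b) : G.map (one a ≫ g) = one (G.obj a) ≫ G.map g := by
    rw [G.map_comp, hZ]
  constructor
  · rintro ⟨φ, hφ⟩
    refine ⟨hG.homEquiv.symm.trans φ, fun h => ?_⟩
    obtain ⟨g, rfl⟩ := hG.map_surjective h
    simp [← map_one_comp, hφ]
  · rintro ⟨φ, hφ⟩
    exact ⟨hG.homEquiv.trans φ, fun g => by simp [map_one_comp, hφ]⟩

lemma IsZIso.homIsFreeTorsor_iff {G : A ⥤ D} (hG : IsZIso G) (a b : A) :
    HomIsFreeTorsor a b ↔ HomIsFreeTorsor (G.obj a) (G.obj b) := by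
  obtain ⟨hZ, G', h₁, h₂⟩ := hG
  exact homIsFreeTorsor_iff_of_fullyFaithful hZ
    (CategoryTheory.Equivalence.mk G G' (eqToIso h₁.symm) (eqToIso h₂)).fullyFaithfulFunctor a b

end

lemma isZFunctor_ι {C : Type*} [Category C] [ZPlus C] (P : ObjectProperty C) :
    IsZFunctor P.ι :=
  fun _ => rfl

lemma homIsFreeTorsor_of_fullSubcategory {C : Type*} [Category C] [ZPlus C]
    {P : ObjectProperty C} {a b : P.FullSubcategory} (h : HomIsFreeTorsor a b) :
    HomIsFreeTorsor a.obj b.obj :=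
  (homIsFreeTorsor_iff_of_fullyFaithful (isZFunctor_ι P) P.fullyFaithfulι a b).1 h

lemma ZeroCyc.homIsFreeTorsor (a b : ZeroCyc) : HomIsFreeTorsor a b :=
  ⟨(Multiplicative.toAdd : Multiplicative ℕ ≃ ℕ), fun (g : Multiplicative ℕ) =>
    toAdd_mul g (Multiplicative.ofAdd 1)⟩

lemma OneCyc.homIsFreeTorsor (a b : OneCyc) : HomIsFreeTorsor a b :=
  ⟨Equiv.refl ℕ, fun (g : ℕ) => by
    change ocomp a a b 1 g = g + 1
    simp only [ocomp, ne_eq, not_true_eq_false, false_and, if_false]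
    omega⟩

/-- Drinfeld, proof of Proposition 1: in a small Z₊-category
whose one-object (resp. two-object) full subcategories are Z₊-isomorphic to
`[0]_cyc` (resp. `[1]_cyc`), for every pair of objects `x`, `y` there is a
unique morphism `f_{xy} : x ⟶ y` such that every `g : x ⟶ y` is uniquely
representable as `g = f_{xy} ∘ (1_x)ⁿ`, `n ∈ Z₊`. -/
theorem exists_unique_basepoint_hom (C : Type u) [SmallCategory C] [ZPlus C]
    (h0 : OneObjHyp C) (h1 : TwoObjHyp C) (x y : C) :
    ∃! f : x ⟶ y, ∀ g : x ⟶ y, ∃! n : ℕ, g = ZPlus.onePow x n ≫ f := by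
  apply HomIsFreeTorsor.existsUnique_basepoint
  by_cases hxy : x = y
  · subst hxy
    obtain ⟨G, hG⟩ := h0 x
    exact homIsFreeTorsor_of_fullSubcategory
      ((hG.homIsFreeTorsor_iff ⟨x, rfl⟩ ⟨x, rfl⟩).2 (ZeroCyc.homIsFreeTorsor _ _))
  · obtain ⟨G, hG⟩ := h1 x y hxy
    exact homIsFreeTorsor_of_fullSubcategory
      ((hG.homIsFreeTorsor_iff ⟨x, .inl rfl⟩ ⟨y, .inr rfl⟩).2 (OneCyc.homIsFreeTorsor _ _))
end
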